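/- Let C be a monoidal category whose hom-sets carry a k-linear structure, C' ⊆ C a monoidal subcategory, and suppose given natural associative unital operations ⊛ : Hom_C(A,V) ⊗ Hom_C(B,W) → Hom_C(A⊗B, V⊗W) for A, B ∈ C, V, W ∈ C' (natural meaning (φ∘α) ⊛ (ψ∘β) = (φ ⊛ ψ) ∘ (α⊗β); unital meaning φ ⊛ (ι∘χ) = φ ⊗ χ and (ι∘χ) ⊛ φ = χ ⊗ φ for morphisms χ into the unit object). Then the family F_{V,W} := id_V ⊛ id_W ∈ End_C(V⊗W) satisfies the cocycle condition F_{U⊗V,W} ∘ (F_{U,V} ⊗ id_W) = F_{U,V⊗W} ∘ (id_U ⊗ F_{V,W}) and the normalization F_{V,1} = id_V = F_{1,V}. -/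

import Mathlib

/-!
Naturality of `⊛` rewrites `(F_{U,V} ▷ W) ≫ F_{U⊗V,W}` as `(id ⊛ id) ⊛ id` and
`(U ◁ F_{V,W}) ≫ F_{U,V⊗W}` as `id ⊛ (id ⊛ id)`, so the cocycle condition is associativity of `⊛`
applied to identities; the normalization is unitality applied to `ι = 𝟙 (𝟙_ C)`.
-/

open CategoryTheory MonoidalCategory

universe v u

section

variable {C : Type u} [Category.{v} C] [MonoidalCategory C] {P : C → Prop}
  (op : ∀ {A B V W : C}, (A ⟶ V) → (B ⟶ W) → (A ⊗ B ⟶ V ⊗ W))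

theorem whiskerRight_comp_op_id_id
    (hnat : ∀ {A' B' A B V W : C}, P V → P W →
      ∀ (α : A' ⟶ A) (β : B' ⟶ B) (φ : A ⟶ V) (ψ : B ⟶ W),
      op (α ≫ φ) (β ≫ ψ) = (α ⊗ₘ β) ≫ op φ ψ)
    {A V W : C} (hV : P V) (hW : P W) (f : A ⟶ V) :
    (f ▷ W) ≫ op (𝟙 V) (𝟙 W) = op f (𝟙 W) := by
  rw [← tensorHom_id, ← hnat hV hW, Category.comp_id, Category.comp_id]

theorem whiskerLeft_comp_op_id_id
    (hnat : ∀ {A' B' A B V W : C}, P V → P W →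
      ∀ (α : A' ⟶ A) (β : B' ⟶ B) (φ : A ⟶ V) (ψ : B ⟶ W),
      op (α ≫ φ) (β ≫ ψ) = (α ⊗ₘ β) ≫ op φ ψ)
    {B V W : C} (hV : P V) (hW : P W) (g : B ⟶ W) :
    (V ◁ g) ≫ op (𝟙 V) (𝟙 W) = op (𝟙 V) g := by
  rw [← id_tensorHom, ← hnat hV hW, Category.comp_id, Category.comp_id]

theorem op_id_id_cocycle
    (hPmul : ∀ {V W : C}, P V → P W → P (V ⊗ W))
    (hnat : ∀ {A' B' A B V W : C}, P V → P W →
      ∀ (α : A' ⟶ A) (β : B' ⟶ B) (φ : A ⟶ V) (ψ : B ⟶ W),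
      op (α ≫ φ) (β ≫ ψ) = (α ⊗ₘ β) ≫ op φ ψ)
    (hassoc : ∀ {A B D V W U : C}, P V → P W → P U →
      ∀ (φ : A ⟶ V) (ψ : B ⟶ W) (ϑ : D ⟶ U),
      (α_ A B D).hom ≫ op φ (op ψ ϑ) = op (op φ ψ) ϑ ≫ (α_ V W U).hom)
    {U V W : C} (hU : P U) (hV : P V) (hW : P W) :
    ((op (𝟙 U) (𝟙 V) : U ⊗ V ⟶ U ⊗ V) ▷ W) ≫ op (𝟙 (U ⊗ V)) (𝟙 W) ≫ (α_ U V W).hom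
      = (α_ U V W).hom ≫ (U ◁ (op (𝟙 V) (𝟙 W) : V ⊗ W ⟶ V ⊗ W)) ≫ op (𝟙 U) (𝟙 (V ⊗ W)) := by
  rw [reassoc_of% whiskerRight_comp_op_id_id op hnat (hPmul hU hV) hW,
    whiskerLeft_comp_op_id_id op hnat hU (hPmul hV hW), hassoc hU hV hW]

theorem op_id_id_unit_eq_id
    (hunit : ∀ {A B V : C}, P V → ∀ (φ : A ⟶ V) (χ : B ⟶ 𝟙_ C),
      op φ χ = φ ⊗ₘ χ ∧ op χ φ = χ ⊗ₘ φ)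
    {V : C} (hV : P V) :
    (op (𝟙 V) (𝟙 (𝟙_ C)) : V ⊗ 𝟙_ C ⟶ V ⊗ 𝟙_ C) = 𝟙 _ ∧
      (op (𝟙 (𝟙_ C)) (𝟙 V) : 𝟙_ C ⊗ V ⟶ 𝟙_ C ⊗ V) = 𝟙 _ := by
  obtain ⟨hright, hleft⟩ := hunit hV (𝟙 V) (𝟙 (𝟙_ C))
  rw [hright, hleft, tensorHom_id, id_whiskerRight, id_tensorHom, MonoidalCategory.whiskerLeft_id]
  exact ⟨rfl, rfl⟩

end

theorem statement8
    {C : Type u} [Category.{v} C] [MonoidalCategory C]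
    -- the monoidal subcategory `C'`, given by its class of objects:
    (P : C → Prop) (hPmul : ∀ {V W : C}, P V → P W → P (V ⊗ W))
    -- the operation `⊛`:
    (op : ∀ {A B V W : C}, (A ⟶ V) → (B ⟶ W) → (A ⊗ B ⟶ V ⊗ W))
    -- naturality with respect to the `C`-arguments:
    (hnat : ∀ {A' B' A B V W : C}, P V → P W →
      ∀ (α : A' ⟶ A) (β : B' ⟶ B) (φ : A ⟶ V) (ψ : B ⟶ W),
      op (α ≫ φ) (β ≫ ψ) = (α ⊗ₘ β) ≫ op φ ψ)
    -- associativity (with the associator inserted):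
    (hassoc : ∀ {A B D V W U : C}, P V → P W → P U →
      ∀ (φ : A ⟶ V) (ψ : B ⟶ W) (ϑ : D ⟶ U),
      (α_ A B D).hom ≫ op φ (op ψ ϑ) = op (op φ ψ) ϑ ≫ (α_ V W U).hom)
    -- unitality:
    (hunit : ∀ {A B V : C}, P V → ∀ (φ : A ⟶ V) (χ : B ⟶ 𝟙_ C),
      op φ χ = φ ⊗ₘ χ ∧ op χ φ = χ ⊗ₘ φ) :
    -- then `F_{V,W} := id_V ⊛ id_W` is a normalized cocycle on `C'`:
    (∀ {U V W : C}, P U → P V → P W →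
      ((op (𝟙 U) (𝟙 V) : U ⊗ V ⟶ U ⊗ V) ▷ W) ≫ (op (𝟙 (U ⊗ V)) (𝟙 W)) ≫ (α_ U V W).hom
        = (α_ U V W).hom ≫ (U ◁ (op (𝟙 V) (𝟙 W) : V ⊗ W ⟶ V ⊗ W)) ≫
            (op (𝟙 U) (𝟙 (V ⊗ W)))) ∧
    (∀ {V : C}, P V →
      (op (𝟙 V) (𝟙 (𝟙_ C)) : V ⊗ 𝟙_ C ⟶ V ⊗ 𝟙_ C) = 𝟙 _ ∧
      (op (𝟙 (𝟙_ C)) (𝟙 V) : 𝟙_ C ⊗ V ⟶ 𝟙_ C ⊗ V) = 𝟙 _) :=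
  ⟨fun hU hV hW => op_id_id_cocycle op hPmul hnat hassoc hU hV hW,
    fun hV => op_id_id_unit_eq_id op hunit hV⟩
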